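/- For every i ∈ {1,…,2n}, the induced transition map satisfies T̃^{a^i}(Z^{i-1}) ⊆ Z^i; that is, the family of zones (Z^i) is invariant under the transition maps along the cycle C. -/
import Mathlib


open Filter Topology Set

noncomputable section

/-- Exit direction `s_k` (as a 0-based coordinate of `Fin n`) of the `k`-th box of the
cycle `C`, for `k = 1, …, 2n` (and periodically in `k`): in the paper's 1-based notation,
`s_k = k` for `1 ≤ k ≤ n` and `s_{n+k} = k`. -/
def sIdx (n : ℕ) [NeZero n] (k : ℕ) : Fin n :=
  ⟨(k - 1) % n, Nat.mod_lt _ (Nat.pos_of_ne_zero (NeZero.ne n))⟩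

/-- The `k`-th box `a^k ∈ {0,1}^n` of the cycle `C`, for `k = 1, …, 2n` (and `a^{2n+1} = a^1`):
`a^1 = (1,…,1)`, and `a^{k+1}` is obtained from `a^k` by flipping coordinate `s_k`.
Coordinate `j : Fin n` (0-based) represents the paper's variable `j+1`. -/
def boxC (n : ℕ) (k : ℕ) (j : Fin n) : Bool :=
  if k ≤ n + 1 then decide (k ≤ (j : ℕ) + 1) else decide ((j : ℕ) + 1 < k - n)

/-- Focal point `φ(a)` of the regular domain (orthant) indexed by `a ∈ {0,1}^n`, for the
negative feedback loop system with focal values `φm j < 0 < φp j`: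
`φ_1(a) = φ_1^-` iff `a_n = 1`, and for `j ≥ 2`, `φ_j(a) = φ_j^+` iff `a_{j-1} = 1`.
(Here `j - 1 : Fin n` is the cyclic predecessor of the coordinate `j`.) -/
def focal (n : ℕ) [NeZero n] (φm φp : Fin n → ℝ) (a : Fin n → Bool) (j : Fin n) : ℝ :=
  if (j : ℕ) = 0 then (if a (j - 1) then φm j else φp j)
  else (if a (j - 1) then φp j else φm j)

/-- Focal point `φ^k = φ(a^k)` of the `k`-th box of the cycle. -/
def phiC (n : ℕ) [NeZero n] (φm φp : Fin n → ℝ) (k : ℕ) : Fin n → ℝ :=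
  focal n φm φp (boxC n k)

/-- The local transition map `T^{a^k}` of the `k`-th box of the cycle:
`(T^{a^k} x)_j = φ^k_j + (x_j − φ^k_j)·(φ^k_{s_k}/(φ^k_{s_k} − x_{s_k}))^{γ_j/γ_{s_k}}`.
It maps the wall `{x_{s_{k-1}} = 0}` into the wall `{x_{s_k} = 0}`. -/
def transMap (n : ℕ) [NeZero n] (γ φm φp : Fin n → ℝ) (k : ℕ) (x : Fin n → ℝ) :
    Fin n → ℝ := fun j =>
  phiC n φm φp k j + (x j - phiC n φm φp k j) *
    (phiC n φm φp k (sIdx n k) / (phiC n φm φp k (sIdx n k) - x (sIdx n k)))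
      ^ (γ j / γ (sIdx n k))

/-- The Poincaré map `T = T^{a^1} ∘ T^{a^{2n}} ∘ T^{a^{2n-1}} ∘ ⋯ ∘ T^{a^2}` of the cycle
(the walls `W^i ⊂ ℝ^{n-1}` being embedded in `ℝ^n` as subsets of the hyperplanes
`{x_{s_i} = 0}`, which are preserved by the corresponding transition maps). -/
def poincare (n : ℕ) [NeZero n] (γ φm φp : Fin n → ℝ) (x : Fin n → ℝ) : Fin n → ℝ :=
  (List.range (2 * n)).foldl (fun y k => transMap n γ φm φp (k + 2) y) x

/-- The zone `Z^k ⊂ ℝ^{n-1}`, embedded in `ℝ^n` as a subset of the hyperplane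
`{x_{s_k} = 0}` (instead of dropping the coordinate `s_k`): for `1 ≤ k ≤ n` it is
`∏_{j<s_k} [φ_j^-, 0] × {0} × ∏_{j>s_k} [0, φ_j^+]`, and for `n+1 ≤ k ≤ 2n` it is
`∏_{j<s_k} [0, φ_j^+] × {0} × ∏_{j>s_k} [φ_j^-, 0]` (periodically in `k`). -/
def zoneC (n : ℕ) [NeZero n] (φm φp : Fin n → ℝ) (k : ℕ) : Set (Fin n → ℝ) :=
  {x | x (sIdx n k) = 0 ∧ ∀ j : Fin n,
    ((j : ℕ) < (sIdx n k : ℕ) →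
      x j ∈ (if (k - 1) % (2 * n) < n then Set.Icc (φm j) 0 else Set.Icc 0 (φp j))) ∧
    ((sIdx n k : ℕ) < (j : ℕ) →
      x j ∈ (if (k - 1) % (2 * n) < n then Set.Icc 0 (φp j) else Set.Icc (φm j) 0))}

end

lemma sub_one_val {n : ℕ} (hn : 2 ≤ n) [NeZero n] (j : Fin n) :
    ((j - 1 : Fin n) : ℕ) = if (j : ℕ) = 0 then n - 1 else (j : ℕ) - 1 := by
  have hj := j.isLt
  rw [Fin.sub_def]
  simp only [Fin.val_one']
  rw [Nat.mod_eq_of_lt hn]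
  split_ifs with h
  · rw [h]; simp [Nat.mod_eq_of_lt (show n - 1 < n by omega)]
  · rw [show n - 1 + (j:ℕ) = n + ((j:ℕ) - 1) by omega, Nat.add_mod_left,
      Nat.mod_eq_of_lt (by omega)]

lemma phiC_eq (n : ℕ) [NeZero n] (hn : 2 ≤ n) (φm φp : Fin n → ℝ)
    (i : ℕ) (hi1 : 2 ≤ i) (hi2 : i ≤ 2 * n + 1) (j : Fin n) :
    phiC n φm φp i j =
      if (i - 1) % (2 * n) < n then
        (if (j : ℕ) ≤ (i - 1) % n then φm j else φp j)
      else
        (if (j : ℕ) ≤ (i - 1) % n then φp j else φm j) := by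
  have hj := j.isLt
  have hsub := sub_one_val hn j
  unfold phiC focal boxC
  rw [hsub]
  rcases (show (2 ≤ i ∧ i ≤ n) ∨ i = n + 1 ∨ (n + 2 ≤ i ∧ i ≤ 2 * n) ∨ i = 2 * n + 1 by omega)
    with hA | hB | hC | hD
  · have e1 : (i - 1) % (2 * n) = i - 1 := Nat.mod_eq_of_lt (by omega)
    have e2 : (i - 1) % n = i - 1 := Nat.mod_eq_of_lt (by omega)
    rw [e1, e2]
    split_ifs <;> first | rfl | omega | (simp only [decide_eq_true_eq] at *; omega)
  · subst hB
    have e1 : (n + 1 - 1) % (2 * n) = n := by rw [Nat.add_sub_cancel, Nat.mod_eq_of_lt (by omega)]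
    have e2 : (n + 1 - 1) % n = 0 := by rw [Nat.add_sub_cancel, Nat.mod_self]
    rw [e1, e2]
    split_ifs <;> first | rfl | omega | (simp only [decide_eq_true_eq] at *; omega)
  · have e1 : (i - 1) % (2 * n) = i - 1 := Nat.mod_eq_of_lt (by omega)
    have e2 : (i - 1) % n = i - 1 - n := by
      conv_lhs => rw [show i - 1 = n + (i - 1 - n) by omega]
      rw [Nat.add_mod_left, Nat.mod_eq_of_lt (by omega)]
    rw [e1, e2]
    split_ifs <;> first | rfl | omega | (simp only [decide_eq_true_eq] at *; omega)
  · subst hD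
    have e1 : (2 * n + 1 - 1) % (2 * n) = 0 := by rw [Nat.add_sub_cancel, Nat.mod_self]
    have e2 : (2 * n + 1 - 1) % n = 0 := by
      rw [Nat.add_sub_cancel, Nat.mul_mod_left]
    rw [e1, e2]
    split_ifs <;> first | rfl | omega | (simp only [decide_eq_true_eq] at *; omega)

lemma convex_mem {lo hi a b r : ℝ} (ha : a ∈ Set.Icc lo hi) (hb : b ∈ Set.Icc lo hi)
    (hr0 : 0 ≤ r) (hr1 : r ≤ 1) : a + (b - a) * r ∈ Set.Icc lo hi := by
  obtain ⟨h1, h2⟩ := ha; obtain ⟨h3, h4⟩ := hb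
  constructor <;> nlinarith

/-- **Invariance of the zones along the cycle.**
For every `i ∈ {1, …, 2n}`, the induced transition map `T̃^{a^i}` maps the zone `Z^{i-1}`
into the zone `Z^i` (indices understood periodically, so with `Z^0 = Z^{2n}`; here the
maps and the zones for `i = 1` are represented by the cycle index `2n + 1`, for which
`a^{2n+1} = a^1`, `s_{2n+1} = s_1` and `Z^{2n+1} = Z^1`). -/
theorem transition_map_zone_invariance
    (n : ℕ) [NeZero n] (hn : 2 ≤ n)
    (γ φm φp : Fin n → ℝ) (hγ : ∀ i, 0 < γ i)
    (hφ : ∀ i, φm i < 0 ∧ 0 < φp i)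
    (i : ℕ) (hi1 : 2 ≤ i) (hi2 : i ≤ 2 * n + 1)
    (x : Fin n → ℝ) (hx : x ∈ zoneC n φm φp (i - 1)) :
    transMap n γ φm φp i x ∈ zoneC n φm φp i := by
  obtain ⟨hx0, hxI⟩ := hx
  have hsv : (sIdx n i : ℕ) = (i - 1) % n := rfl
  have hsv' : (sIdx n (i - 1) : ℕ) = (i - 1 - 1) % n := rfl
  have key : (∀ j : Fin n,
      ((j : ℕ) < (sIdx n i : ℕ) →
        x j ∈ (if (i - 1) % (2 * n) < n then Set.Icc (φm j) 0 else Set.Icc 0 (φp j))) ∧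
      ((sIdx n i : ℕ) < (j : ℕ) →
        x j ∈ (if (i - 1) % (2 * n) < n then Set.Icc 0 (φp j) else Set.Icc (φm j) 0)))
      ∧ (if (i - 1) % (2 * n) < n then 0 ≤ x (sIdx n i) else x (sIdx n i) ≤ 0) := by
    rcases (show (2 ≤ i ∧ i ≤ n) ∨ i = n + 1 ∨ (n + 2 ≤ i ∧ i ≤ 2 * n) ∨ i = 2 * n + 1 by omega)
      with hA | hB | hC | hD
    · -- 2 ≤ i ≤ n
      have ht1 : (i - 1) % (2 * n) < n := by rw [Nat.mod_eq_of_lt (by omega)]; omega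
      have ht1' : (i - 1 - 1) % (2 * n) < n := by rw [Nat.mod_eq_of_lt (by omega)]; omega
      have hS : (sIdx n i : ℕ) = i - 1 := by rw [hsv, Nat.mod_eq_of_lt (by omega)]
      have hS' : (sIdx n (i - 1) : ℕ) = i - 2 := by
        rw [hsv', show i - 1 - 1 = i - 2 by omega, Nat.mod_eq_of_lt (by omega)]
      refine ⟨fun j => ⟨fun hj => ?_, fun hj => ?_⟩, ?_⟩
      · rw [if_pos ht1]
        rw [hS] at hj
        by_cases hj2 : (j : ℕ) < i - 2
        · have h := (hxI j).1 (by rw [hS']; exact hj2)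
          rwa [if_pos ht1'] at h
        · have hje : j = sIdx n (i - 1) := Fin.ext (by rw [hS']; omega)
          rw [hje, hx0]
          exact ⟨(hφ _).1.le, le_refl 0⟩
      · rw [if_pos ht1]
        rw [hS] at hj
        have h := (hxI j).2 (by rw [hS']; omega)
        rwa [if_pos ht1'] at h
      · rw [if_pos ht1]
        have h := (hxI (sIdx n i)).2 (by rw [hS', hS]; omega)
        rw [if_pos ht1'] at h
        exact h.1
    · -- i = n + 1
      subst hB
      have ht1 : ¬ (n + 1 - 1) % (2 * n) < n := by
        rw [Nat.add_sub_cancel, Nat.mod_eq_of_lt (by omega)]; omega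
      have ht1' : (n + 1 - 1 - 1) % (2 * n) < n := by
        rw [show n + 1 - 1 - 1 = n - 1 by omega, Nat.mod_eq_of_lt (by omega)]; omega
      have hS : (sIdx n (n + 1) : ℕ) = 0 := by rw [hsv, Nat.add_sub_cancel, Nat.mod_self]
      have hS' : (sIdx n (n + 1 - 1) : ℕ) = n - 1 := by
        rw [hsv', show n + 1 - 1 - 1 = n - 1 by omega, Nat.mod_eq_of_lt (by omega)]
      refine ⟨fun j => ⟨fun hj => ?_, fun hj => ?_⟩, ?_⟩
      · rw [hS] at hj; omega
      · rw [if_neg ht1]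
        by_cases hj2 : (j : ℕ) < n - 1
        · have h := (hxI j).1 (by rw [hS']; exact hj2)
          rwa [if_pos ht1'] at h
        · have hje : j = sIdx n (n + 1 - 1) := Fin.ext (by rw [hS']; have := j.isLt; omega)
          rw [hje, hx0]
          exact ⟨(hφ _).1.le, le_refl 0⟩
      · rw [if_neg ht1]
        have h := (hxI (sIdx n (n + 1))).1 (by rw [hS', hS]; omega)
        rw [if_pos ht1'] at h
        exact h.2
    · -- n + 2 ≤ i ≤ 2n
      have ht1 : ¬ (i - 1) % (2 * n) < n := by rw [Nat.mod_eq_of_lt (by omega)]; omega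
      have ht1' : ¬ (i - 1 - 1) % (2 * n) < n := by
        rw [show i - 1 - 1 = i - 2 by omega, Nat.mod_eq_of_lt (by omega)]; omega
      have hS : (sIdx n i : ℕ) = i - 1 - n := by
        rw [hsv]
        conv_lhs => rw [show i - 1 = n + (i - 1 - n) by omega]
        rw [Nat.add_mod_left, Nat.mod_eq_of_lt (by omega)]
      have hS' : (sIdx n (i - 1) : ℕ) = i - 2 - n := by
        rw [hsv']
        conv_lhs => rw [show i - 1 - 1 = n + (i - 2 - n) by omega]
        rw [Nat.add_mod_left, Nat.mod_eq_of_lt (by omega)]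
      refine ⟨fun j => ⟨fun hj => ?_, fun hj => ?_⟩, ?_⟩
      · rw [if_neg ht1]
        rw [hS] at hj
        by_cases hj2 : (j : ℕ) < i - 2 - n
        · have h := (hxI j).1 (by rw [hS']; exact hj2)
          rwa [if_neg ht1'] at h
        · have hje : j = sIdx n (i - 1) := Fin.ext (by rw [hS']; omega)
          rw [hje, hx0]
          exact ⟨le_refl 0, (hφ _).2.le⟩
      · rw [if_neg ht1]
        rw [hS] at hj
        have h := (hxI j).2 (by rw [hS']; omega)
        rwa [if_neg ht1'] at h
      · rw [if_neg ht1]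
        have h := (hxI (sIdx n i)).2 (by rw [hS', hS]; omega)
        rw [if_neg ht1'] at h
        exact h.2
    · -- i = 2n + 1
      subst hD
      have ht1 : (2 * n + 1 - 1) % (2 * n) < n := by
        rw [Nat.add_sub_cancel, Nat.mod_self]; omega
      have ht1' : ¬ (2 * n + 1 - 1 - 1) % (2 * n) < n := by
        rw [show 2 * n + 1 - 1 - 1 = 2 * n - 1 by omega, Nat.mod_eq_of_lt (by omega)]; omega
      have hS : (sIdx n (2 * n + 1) : ℕ) = 0 := by
        rw [hsv, Nat.add_sub_cancel, Nat.mul_mod_left]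
      have hS' : (sIdx n (2 * n + 1 - 1) : ℕ) = n - 1 := by
        rw [hsv']
        conv_lhs => rw [show 2 * n + 1 - 1 - 1 = n + (n - 1) by omega]
        rw [Nat.add_mod_left, Nat.mod_eq_of_lt (by omega)]
      refine ⟨fun j => ⟨fun hj => ?_, fun hj => ?_⟩, ?_⟩
      · rw [hS] at hj; omega
      · rw [if_pos ht1]
        by_cases hj2 : (j : ℕ) < n - 1
        · have h := (hxI j).1 (by rw [hS']; exact hj2)
          rwa [if_neg ht1'] at h
        · have hje : j = sIdx n (2 * n + 1 - 1) := Fin.ext (by rw [hS']; have := j.isLt; omega)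
          rw [hje, hx0]
          exact ⟨le_refl 0, (hφ _).2.le⟩
      · rw [if_pos ht1]
        have h := (hxI (sIdx n (2 * n + 1))).1 (by rw [hS', hS]; omega)
        rw [if_neg ht1'] at h
        exact h.1
  obtain ⟨hH1, hxs⟩ := key
  have hφs : phiC n φm φp i (sIdx n i) =
      if (i - 1) % (2 * n) < n then φm (sIdx n i) else φp (sIdx n i) := by
    rw [phiC_eq n hn φm φp i hi1 hi2 (sIdx n i)]
    by_cases ht : (i - 1) % (2 * n) < n
    · rw [if_pos ht, if_pos ht, if_pos (le_of_eq hsv)]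
    · rw [if_neg ht, if_neg ht, if_pos (le_of_eq hsv)]
  have hratio : 0 < phiC n φm φp i (sIdx n i) / (phiC n φm φp i (sIdx n i) - x (sIdx n i)) ∧
      phiC n φm φp i (sIdx n i) / (phiC n φm φp i (sIdx n i) - x (sIdx n i)) ≤ 1 := by
    by_cases ht : (i - 1) % (2 * n) < n
    · rw [hφs, if_pos ht]
      rw [if_pos ht] at hxs
      have hc := (hφ (sIdx n i)).1
      have hd : φm (sIdx n i) - x (sIdx n i) < 0 := by linarith
      exact ⟨div_pos_of_neg_of_neg hc hd, by rw [div_le_iff_of_neg hd]; linarith⟩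
    · rw [hφs, if_neg ht]
      rw [if_neg ht] at hxs
      have hc := (hφ (sIdx n i)).2
      have hd : 0 < φp (sIdx n i) - x (sIdx n i) := by linarith
      exact ⟨div_pos hc hd, by rw [div_le_one hd]; linarith⟩
  have hne : phiC n φm φp i (sIdx n i) - x (sIdx n i) ≠ 0 := by
    intro h
    rw [h, div_zero] at hratio
    exact lt_irrefl 0 hratio.1
  have hα : ∀ j : Fin n,
      0 ≤ (phiC n φm φp i (sIdx n i) / (phiC n φm φp i (sIdx n i) - x (sIdx n i)))
            ^ (γ j / γ (sIdx n i)) ∧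
      (phiC n φm φp i (sIdx n i) / (phiC n φm φp i (sIdx n i) - x (sIdx n i)))
            ^ (γ j / γ (sIdx n i)) ≤ 1 := fun j =>
    ⟨Real.rpow_nonneg hratio.1.le _,
     Real.rpow_le_one hratio.1.le hratio.2 (div_nonneg (hγ j).le (hγ (sIdx n i)).le)⟩
  refine ⟨?_, fun j => ⟨fun hj => ?_, fun hj => ?_⟩⟩
  · show phiC n φm φp i (sIdx n i) + (x (sIdx n i) - phiC n φm φp i (sIdx n i)) *
      (phiC n φm φp i (sIdx n i) / (phiC n φm φp i (sIdx n i) - x (sIdx n i)))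
        ^ (γ (sIdx n i) / γ (sIdx n i)) = 0
    rw [div_self (hγ (sIdx n i)).ne', Real.rpow_one]
    field_simp
    ring
  · show phiC n φm φp i j + (x j - phiC n φm φp i j) *
      (phiC n φm φp i (sIdx n i) / (phiC n φm φp i (sIdx n i) - x (sIdx n i)))
        ^ (γ j / γ (sIdx n i)) ∈ _
    have hxj := (hH1 j).1 hj
    have hφj : phiC n φm φp i j ∈
        (if (i - 1) % (2 * n) < n then Set.Icc (φm j) 0 else Set.Icc 0 (φp j)) := by
      rw [phiC_eq n hn φm φp i hi1 hi2 j]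
      have hjle : (j : ℕ) ≤ (i - 1) % n := by rw [← hsv]; omega
      by_cases ht : (i - 1) % (2 * n) < n
      · rw [if_pos ht, if_pos ht, if_pos hjle]
        exact ⟨le_refl _, (hφ j).1.le⟩
      · rw [if_neg ht, if_neg ht, if_pos hjle]
        exact ⟨(hφ j).2.le, le_refl _⟩
    by_cases ht : (i - 1) % (2 * n) < n
    · rw [if_pos ht] at hxj hφj ⊢
      exact convex_mem hφj hxj (hα j).1 (hα j).2
    · rw [if_neg ht] at hxj hφj ⊢
      exact convex_mem hφj hxj (hα j).1 (hα j).2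
  · show phiC n φm φp i j + (x j - phiC n φm φp i j) *
      (phiC n φm φp i (sIdx n i) / (phiC n φm φp i (sIdx n i) - x (sIdx n i)))
        ^ (γ j / γ (sIdx n i)) ∈ _
    have hxj := (hH1 j).2 hj
    have hφj : phiC n φm φp i j ∈
        (if (i - 1) % (2 * n) < n then Set.Icc 0 (φp j) else Set.Icc (φm j) 0) := by
      rw [phiC_eq n hn φm φp i hi1 hi2 j]
      have hjgt : ¬ (j : ℕ) ≤ (i - 1) % n := by rw [← hsv]; omega
      by_cases ht : (i - 1) % (2 * n) < n
      · rw [if_pos ht, if_pos ht, if_neg hjgt]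
        exact ⟨(hφ j).2.le, le_refl _⟩
      · rw [if_neg ht, if_neg ht, if_neg hjgt]
        exact ⟨le_refl _, (hφ j).1.le⟩
    by_cases ht : (i - 1) % (2 * n) < n
    · rw [if_pos ht] at hxj hφj ⊢
      exact convex_mem hφj hxj (hα j).1 (hα j).2
    · rw [if_neg ht] at hxj hφj ⊢
      exact convex_mem hφj hxj (hα j).1 (hα j).2
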